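/- arXiv:1801.05910 — 3 statements merged into one kernel-verified Lean document; each statement's English description precedes it below -/
import Mathlib

section
/- For all n ≥ 0, j³ₙ₊₁ + j³ₙ = 3·J³ₙ₊₂, where J³ₙ and j³ₙ are the third-order Jacobsthal and Jacobsthal-Lucas numbers. -/
/-!
Both sides are solutions of the linear recurrence `u (n + 3) = u (n + 2) + u (n + 1) + 2 * u n`
(solutions are closed under shifts, sums and scalar multiples), and a solution is determined by
its first three terms, on which the two sides agree.
-/

def J3 : ℕ → ℤ
  | 0 => 0
  | 1 => 1
  | 2 => 1
  | n + 3 => J3 (n + 2) + J3 (n + 1) + 2 * J3 n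

def j3 : ℕ → ℤ
  | 0 => 2
  | 1 => 1
  | 2 => 5
  | n + 3 => j3 (n + 2) + j3 (n + 1) + 2 * j3 n

def V3 (n : ℕ) : ℤ := if n % 3 = 0 then 2 else if n % 3 = 1 then -3 else 1

theorem LinearRecurrence.IsSolution.comp_add_right {R : Type*} [CommSemiring R]
    {E : LinearRecurrence R} {u : ℕ → R} (hu : E.IsSolution u) (k : ℕ) :
    E.IsSolution (fun n ↦ u (n + k)) := by
  intro n
  simpa only [Nat.add_right_comm] using hu (n + k)

def jacobsthal3Rec (R : Type*) [CommSemiring R] : LinearRecurrence R := ⟨3, ![2, 1, 1]⟩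

theorem jacobsthal3Rec_isSolution_iff {R : Type*} [CommSemiring R] {u : ℕ → R} :
    (jacobsthal3Rec R).IsSolution u ↔ ∀ n, u (n + 3) = u (n + 2) + u (n + 1) + 2 * u n := by
  refine forall_congr' fun n ↦ ?_
  show u (n + 3) = ∑ i : Fin 3, ![(2 : R), 1, 1] i * u (n + i) ↔ _
  rw [Fin.sum_univ_three]
  apply Iff.of_eq
  congr 1
  simp only [Fin.isValue, Matrix.cons_val, Fin.val_zero, Fin.val_one, Fin.val_two,
    add_zero, one_mul]
  ring

theorem isSolution_J3 : (jacobsthal3Rec ℤ).IsSolution J3 :=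
  jacobsthal3Rec_isSolution_iff.2 fun _ ↦ rfl

theorem isSolution_j3 : (jacobsthal3Rec ℤ).IsSolution j3 :=
  jacobsthal3Rec_isSolution_iff.2 fun _ ↦ rfl

theorem stmt_4 : ∀ n : ℕ, j3 (n + 1) + j3 n = 3 * J3 (n + 2) := by
  let E := jacobsthal3Rec ℤ
  have hlhs : (fun n ↦ j3 (n + 1)) + j3 ∈ E.solSpace :=
    E.solSpace.add_mem (isSolution_j3.comp_add_right 1) isSolution_j3
  have hrhs : (3 : ℤ) • (fun n ↦ J3 (n + 2)) ∈ E.solSpace :=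
    E.solSpace.smul_mem 3 (isSolution_J3.comp_add_right 2)
  have hinit : Set.EqOn ((fun n ↦ j3 (n + 1)) + j3) ((3 : ℤ) • fun n ↦ J3 (n + 2))
      (Finset.range E.order) := by
    intro n hn
    have hn : n < 3 := Finset.mem_range.1 hn
    interval_cases n <;> rfl
  exact congrFun ((E.eq_iff_eqOn_range_order _ _ hlhs hrhs).2 hinit)
end

section
/- For all m ≥ 0, jN_{m+1} + jN_m = 3·JN_{m+2}, where JN and jN are the dual third-order Jacobsthal and Jacobsthal-Lucas quaternions. -/
noncomputable section

abbrev DualQ := TrivSqZeroExt ℝ (Fin 3 → ℝ)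

def qi : DualQ := TrivSqZeroExt.inr (Pi.single 0 1)
def qj : DualQ := TrivSqZeroExt.inr (Pi.single 1 1)
def qk : DualQ := TrivSqZeroExt.inr (Pi.single 2 1)

def JN (m : ℕ) : DualQ :=
  (J3 m : DualQ) + (J3 (m + 1) : DualQ) * qi + (J3 (m + 2) : DualQ) * qj + (J3 (m + 3) : DualQ) * qk

def jN (m : ℕ) : DualQ :=
  (j3 m : DualQ) + (j3 (m + 1) : DualQ) * qi + (j3 (m + 2) : DualQ) * qj + (j3 (m + 3) : DualQ) * qk

def conjJN (m : ℕ) : DualQ :=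
  (J3 m : DualQ) - (J3 (m + 1) : DualQ) * qi - (J3 (m + 2) : DualQ) * qj - (J3 (m + 3) : DualQ) * qk

def conjjN (m : ℕ) : DualQ :=
  (j3 m : DualQ) - (j3 (m + 1) : DualQ) * qi - (j3 (m + 2) : DualQ) * qj - (j3 (m + 3) : DualQ) * qk

def VN (m : ℕ) : DualQ :=
  (V3 m : DualQ) + (V3 (m + 1) : DualQ) * qi + (V3 (m + 2) : DualQ) * qj + (V3 (m + 3) : DualQ) * qk

/-! Both sides of the identity have as coordinates sequences satisfying the third-order
Jacobsthal recurrence, so it suffices to compare the three initial values of the scalar identity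
`j³ₙ₊₁ + j³ₙ = 3 J³ₙ₊₂`. -/

section Recurrence

variable {R : Type*} [CommSemiring R]

def IsJacobsthal3Rec (a : ℕ → R) : Prop :=
  ∀ n, a (n + 3) = a (n + 2) + a (n + 1) + 2 * a n

namespace IsJacobsthal3Rec

variable {a b : ℕ → R}

theorem shift (ha : IsJacobsthal3Rec a) (k : ℕ) : IsJacobsthal3Rec fun n => a (n + k) := by
  intro n
  simpa only [Nat.add_right_comm _ k] using ha (n + k)

theorem add (ha : IsJacobsthal3Rec a) (hb : IsJacobsthal3Rec b) :
    IsJacobsthal3Rec fun n => a n + b n := by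
  intro n
  dsimp only
  rw [ha n, hb n]
  ring

theorem const_mul (ha : IsJacobsthal3Rec a) (c : R) :
    IsJacobsthal3Rec fun n => c * a n := by
  intro n
  dsimp only
  rw [ha n]
  ring

theorem eq_of_initial (ha : IsJacobsthal3Rec a) (hb : IsJacobsthal3Rec b)
    (h0 : a 0 = b 0) (h1 : a 1 = b 1) (h2 : a 2 = b 2) : a = b := by
  have triple : ∀ n, a n = b n ∧ a (n + 1) = b (n + 1) ∧ a (n + 2) = b (n + 2) := by
    intro n
    induction n with
    | zero => exact ⟨h0, h1, h2⟩
    | succ n ih =>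
      obtain ⟨e0, e1, e2⟩ := ih
      exact ⟨e1, e2, by rw [ha, hb, e0, e1, e2]⟩
  exact funext fun n => (triple n).1

end IsJacobsthal3Rec

end Recurrence

theorem isJacobsthal3Rec_J3 : IsJacobsthal3Rec J3 := fun _ => rfl

theorem isJacobsthal3Rec_j3 : IsJacobsthal3Rec j3 := fun _ => rfl

theorem j3_succ_add_j3 (n : ℕ) : j3 (n + 1) + j3 n = 3 * J3 (n + 2) := by
  have h := (isJacobsthal3Rec_j3.shift 1).add isJacobsthal3Rec_j3 |>.eq_of_initial
    ((isJacobsthal3Rec_J3.shift 2).const_mul 3) rfl rfl rfl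
  exact congrFun h n

def toDualQ (a : ℕ → ℤ) (m : ℕ) : DualQ :=
  (a m : DualQ) + (a (m + 1) : DualQ) * qi + (a (m + 2) : DualQ) * qj + (a (m + 3) : DualQ) * qk

theorem toDualQ_add (a b : ℕ → ℤ) (m : ℕ) :
    toDualQ (fun n => a n + b n) m = toDualQ a m + toDualQ b m := by
  simp only [toDualQ]
  push_cast
  ring

theorem toDualQ_const_mul (c : ℤ) (a : ℕ → ℤ) (m : ℕ) :
    toDualQ (fun n => c * a n) m = c * toDualQ a m := by
  simp only [toDualQ]
  push_cast
  ring

theorem toDualQ_shift (a : ℕ → ℤ) (k m : ℕ) :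
    toDualQ (fun n => a (n + k)) m = toDualQ a (m + k) := by
  simp only [toDualQ, Nat.add_right_comm _ k]

theorem JN_eq_toDualQ (m : ℕ) : JN m = toDualQ J3 m := rfl

theorem jN_eq_toDualQ (m : ℕ) : jN m = toDualQ j3 m := rfl

theorem stmt_15 : ∀ m : ℕ, jN (m + 1) + jN m = 3 * JN (m + 2) := by
  intro m
  calc jN (m + 1) + jN m
      = toDualQ (fun n => j3 (n + 1) + j3 n) m := by
        rw [toDualQ_add, toDualQ_shift, jN_eq_toDualQ, jN_eq_toDualQ]
    _ = toDualQ (fun n => 3 * J3 (n + 2)) m := by simp only [j3_succ_add_j3]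
    _ = 3 * JN (m + 2) := by
        rw [toDualQ_const_mul, toDualQ_shift, JN_eq_toDualQ, Int.cast_ofNat]
end
end

section
/- For all m ≥ 0, (jN_m)² + 3·JN_{m+3}·jN_{m+3} = 4^(m+3)·(1 + 4i + 8j + 16k) in the dual quaternion algebra. -/
noncomputable section

/-!
Both sequences have Binet forms `7 J3 n = 2 ^ (n + 1) - V3 n` and `7 j3 n = 2 ^ (n + 3) + 3 V3 n`,
where `V3` is 3-periodic. Substituting them, the periodic parts cancel in
`2 j3 a j3 b + 3 (J3 (a + 3) j3 (b + 3) + J3 (b + 3) j3 (a + 3)) = 2 ^ (a + b + 7)`.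
Since all products of imaginary units vanish, the `qi`, `qj`, `qk` coefficients of
`jN m ^ 2 + 3 JN (m + 3) jN (m + 3)` are this expression for `a = m` and `b = m + 1, m + 2, m + 3`,
and its real part is half of the expression for `a = b = m`.
-/

theorem V3_add_three (n : ℕ) : V3 (n + 3) = V3 n := by
  simp [V3, Nat.add_mod_right]

theorem V3_add_V3_add_one_add_V3_add_two (n : ℕ) : V3 n + V3 (n + 1) + V3 (n + 2) = 0 := by
  have : n % 3 = 0 ∧ (n + 1) % 3 = 1 ∧ (n + 2) % 3 = 2 ∨
      n % 3 = 1 ∧ (n + 1) % 3 = 2 ∧ (n + 2) % 3 = 0 ∨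
      n % 3 = 2 ∧ (n + 1) % 3 = 0 ∧ (n + 2) % 3 = 1 := by omega
  rcases this with ⟨h₀, h₁, h₂⟩ | ⟨h₀, h₁, h₂⟩ | ⟨h₀, h₁, h₂⟩ <;> simp [V3, h₀, h₁, h₂]

theorem V3_recurrence (n : ℕ) : V3 (n + 3) = V3 (n + 2) + V3 (n + 1) + 2 * V3 n := by
  linear_combination V3_add_three n - V3_add_V3_add_one_add_V3_add_two n

theorem seven_mul_J3 : ∀ n, 7 * J3 n = 2 ^ (n + 1) - V3 n
  | 0 => by decide
  | 1 => by decide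
  | 2 => by decide
  | n + 3 => by
    rw [J3]
    linear_combination seven_mul_J3 (n + 2) + seven_mul_J3 (n + 1) + 2 * seven_mul_J3 n
      + V3_recurrence n

theorem seven_mul_j3 : ∀ n, 7 * j3 n = 2 ^ (n + 3) + 3 * V3 n
  | 0 => by decide
  | 1 => by decide
  | 2 => by decide
  | n + 3 => by
    rw [j3]
    linear_combination seven_mul_j3 (n + 2) + seven_mul_j3 (n + 1) + 2 * seven_mul_j3 n
      - 3 * V3_recurrence n

theorem two_mul_j3_mul_j3_add_three_mul (a b : ℕ) :
    2 * (j3 a * j3 b) + 3 * (J3 (a + 3) * j3 (b + 3) + J3 (b + 3) * j3 (a + 3)) =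
      2 ^ (a + b + 7) := by
  have hJa := seven_mul_J3 (a + 3)
  have hJb := seven_mul_J3 (b + 3)
  have hja := seven_mul_j3 (a + 3)
  have hjb := seven_mul_j3 (b + 3)
  rw [V3_add_three] at hJa hJb hja hjb
  refine mul_left_cancel₀ (show (49 : ℤ) ≠ 0 by norm_num) ?_
  linear_combination 2 * (7 * j3 a * seven_mul_j3 b + (2 ^ (b + 3) + 3 * V3 b) * seven_mul_j3 a)
    + 3 * (7 * J3 (a + 3) * hjb + (2 ^ (b + 6) + 3 * V3 b) * hJa
      + 7 * J3 (b + 3) * hja + (2 ^ (a + 6) + 3 * V3 a) * hJb)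

namespace DualQ

def ofCoeffs (a₀ a₁ a₂ a₃ : ℤ) : DualQ := a₀ + a₁ * qi + a₂ * qj + a₃ * qk

theorem ofCoeffs_add (a₀ a₁ a₂ a₃ b₀ b₁ b₂ b₃ : ℤ) :
    ofCoeffs a₀ a₁ a₂ a₃ + ofCoeffs b₀ b₁ b₂ b₃ =
      ofCoeffs (a₀ + b₀) (a₁ + b₁) (a₂ + b₂) (a₃ + b₃) := by
  simp only [ofCoeffs]
  push_cast
  ring

theorem ofCoeffs_mul (a₀ a₁ a₂ a₃ b₀ b₁ b₂ b₃ : ℤ) :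
    ofCoeffs a₀ a₁ a₂ a₃ * ofCoeffs b₀ b₁ b₂ b₃ =
      ofCoeffs (a₀ * b₀) (a₀ * b₁ + a₁ * b₀) (a₀ * b₂ + a₂ * b₀) (a₀ * b₃ + a₃ * b₀) := by
  have hii : qi * qi = 0 := TrivSqZeroExt.inr_mul_inr _ _ _
  have hjj : qj * qj = 0 := TrivSqZeroExt.inr_mul_inr _ _ _
  have hkk : qk * qk = 0 := TrivSqZeroExt.inr_mul_inr _ _ _
  have hij : qi * qj = 0 := TrivSqZeroExt.inr_mul_inr _ _ _
  have hik : qi * qk = 0 := TrivSqZeroExt.inr_mul_inr _ _ _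
  have hjk : qj * qk = 0 := TrivSqZeroExt.inr_mul_inr _ _ _
  simp only [ofCoeffs]
  push_cast
  linear_combination (a₁ * b₁ : DualQ) * hii + (a₂ * b₂ : DualQ) * hjj + (a₃ * b₃ : DualQ) * hkk
    + (a₁ * b₂ + a₂ * b₁ : DualQ) * hij + (a₁ * b₃ + a₃ * b₁ : DualQ) * hik
    + (a₂ * b₃ + a₃ * b₂ : DualQ) * hjk

end DualQ

open DualQ

theorem JN_eq_ofCoeffs (m : ℕ) : JN m = ofCoeffs (J3 m) (J3 (m + 1)) (J3 (m + 2)) (J3 (m + 3)) :=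
  rfl

theorem jN_eq_ofCoeffs (m : ℕ) : jN m = ofCoeffs (j3 m) (j3 (m + 1)) (j3 (m + 2)) (j3 (m + 3)) :=
  rfl

theorem stmt_16 : ∀ m : ℕ,
    (jN m) ^ 2 + 3 * JN (m + 3) * jN (m + 3) =
      (4 : DualQ) ^ (m + 3) * (1 + 4 * qi + 8 * qj + 16 * qk) := by
  intro m
  have three : (3 : DualQ) = ofCoeffs 3 0 0 0 := by simp [ofCoeffs]
  have rhs : (4 : DualQ) ^ (m + 3) * (1 + 4 * qi + 8 * qj + 16 * qk) =
      ofCoeffs (2 ^ (m + m + 6)) (2 ^ (m + (m + 1) + 7)) (2 ^ (m + (m + 2) + 7))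
        (2 ^ (m + (m + 3) + 7)) := by
    simp only [ofCoeffs]
    push_cast
    rw [show (4 : DualQ) = 2 ^ 2 by norm_num, ← pow_mul]
    ring
  rw [sq, three, rhs, JN_eq_ofCoeffs, jN_eq_ofCoeffs, jN_eq_ofCoeffs, ofCoeffs_mul, ofCoeffs_mul,
    ofCoeffs_mul, ofCoeffs_add]
  congr 1
  · linarith [two_mul_j3_mul_j3_add_three_mul m m, pow_succ (2 : ℤ) (m + m + 6)]
  · linear_combination two_mul_j3_mul_j3_add_three_mul m (m + 1)
  · linear_combination two_mul_j3_mul_j3_add_three_mul m (m + 2)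
  · linear_combination two_mul_j3_mul_j3_add_three_mul m (m + 3)
end
end
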